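/- arXiv:1008.3497 — 2 statements merged into one kernel-verified Lean document; each statement's English description precedes it below -/
import Mathlib

section
/- Let A be a C*-algebra and let a, b be positive elements of A. Then a ∼_s b if and only if the Hilbert A-modules E_a and E_b are isometrically isomorphic, i.e. if and only if there exists a bijection Φ : E_a → E_b which is additive, right A-linear (Φ(x c) = Φ(x) c for all x ∈ E_a and c ∈ A), and satisfies Φ(x)* Φ(y) = x* y for all x, y ∈ E_a. -/
open Filter Topology

noncomputable section

variable {A : Type*}

/-- The hereditary subalgebra `A_a`: the norm-closure of `{a * x * a : x ∈ A}`. -/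
def herSub [NonUnitalCStarAlgebra A] (a : A) : Set A :=
  closure {y : A | ∃ x : A, y = a * x * a}

/-- The right ideal `E_a`: the norm-closure of `{a * x : x ∈ A}`. -/
def rightIdeal [NonUnitalCStarAlgebra A] (a : A) : Set A :=
  closure {y : A | ∃ x : A, y = a * x}

/-- Pedersen equivalence: `a = x* x` and `b = x x*` for some `x`. -/
def PedersenEquiv [NonUnitalCStarAlgebra A] (a b : A) : Prop :=
  ∃ x : A, a = star x * x ∧ b = x * star x

/-- Blackadar equivalence `a ∼ₛ b`: there is `x ∈ A` with `A_a = A_{x*x}` and `A_b = A_{xx*}`. -/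
def BlackadarEquiv [NonUnitalCStarAlgebra A] (a b : A) : Prop :=
  ∃ x : A, herSub a = herSub (star x * x) ∧ herSub b = herSub (x * star x)

/-- Blackadar subequivalence `a ≾ₛ b`: there is a positive `a' ∈ A_b` with `a ∼ₛ a'`. -/
def BlackadarLe [NonUnitalCStarAlgebra A] [PartialOrder A] (a b : A) : Prop :=
  ∃ a' : A, 0 ≤ a' ∧ a' ∈ herSub b ∧ BlackadarEquiv a a'

/-- Cuntz subequivalence `a ≾ b`: there is a sequence `xₙ` with `‖xₙ* b xₙ - a‖ → 0`. -/
def CuntzLe [NonUnitalCStarAlgebra A] (a b : A) : Prop :=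
  ∃ x : ℕ → A, Tendsto (fun n => ‖star (x n) * b * x n - a‖) atTop (𝓝 0)

/-- Cuntz equivalence `a ≈ b`. -/
def CuntzEquiv [NonUnitalCStarAlgebra A] (a b : A) : Prop :=
  CuntzLe a b ∧ CuntzLe b a

/-- Compact containment `a ⊂⊂ b`: there is a positive `e ∈ A_b` with `e * a = a`. -/
def CpctContained [NonUnitalCStarAlgebra A] [PartialOrder A] (a b : A) : Prop :=
  ∃ e : A, 0 ≤ e ∧ e ∈ herSub b ∧ e * a = a

/-!
For positive `a`, the closed right ideal `E_a` and the hereditary subalgebra `A_a` determine each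
other: `A_a` is the closure of `E_a E_a^*`, and `E_a` is the closure of `A_a A` (both use that
`x ∈ closure (x x^* A)`, proved with an approximate unit from the functional calculus). Hence
`a ∼ₛ b` says precisely that `E_a = closure (|x| A)` and `E_b = closure (x A)` for some `x`.
Since `|x|^* |x| = x^* x`, the assignment `|x| c ↦ x c` preserves inner products, so the closure
of its graph is the graph of an isometric isomorphism `E_a ≅ E_b`. Conversely, an isomorphism `Φ`
yields `x = Φ (√a)` with `x^* x = a` and `closure (x A) = Φ (E_a) = E_b`.
-/

lemma IsClosed.image_of_dist_eq {α β : Type*} [MetricSpace α] [CompleteSpace α] [MetricSpace β]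
    {s : Set α} (hs : IsClosed s) {f : α → β}
    (hf : ∀ x ∈ s, ∀ y ∈ s, dist (f x) (f y) = dist x y) : IsClosed (f '' s) := by
  have : CompleteSpace s := hs.completeSpace_coe
  rw [← Set.range_domRestrict]
  exact (Isometry.of_dist_eq fun (x y : s) => hf x x.2 y y.2).isClosedEmbedding.isClosed_range

lemma abs_mul_one_sub_sq_le {t η : ℝ} (ht : 0 ≤ t) (hη : 0 < η) :
    |t * (1 - t * (t / (t ^ 2 + η ^ 2))) ^ 2| ≤ η := by
  have hd : 0 < t ^ 2 + η ^ 2 := by positivity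
  have hs : 1 - t * (t / (t ^ 2 + η ^ 2)) = η ^ 2 / (t ^ 2 + η ^ 2) := by
    field_simp; ring
  have hs₁ : η ^ 2 / (t ^ 2 + η ^ 2) ≤ 1 := (div_le_one hd).2 (by nlinarith)
  have hts : t * (η ^ 2 / (t ^ 2 + η ^ 2)) ≤ η := by
    rw [mul_div_assoc', div_le_iff₀ hd]
    nlinarith [sq_nonneg (t - η)]
  rw [hs, abs_of_nonneg (by positivity)]
  calc t * (η ^ 2 / (t ^ 2 + η ^ 2)) ^ 2
      = t * (η ^ 2 / (t ^ 2 + η ^ 2)) * (η ^ 2 / (t ^ 2 + η ^ 2)) := by ring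
    _ ≤ η * 1 := mul_le_mul hts hs₁ (by positivity) hη.le
    _ = η := mul_one η

section CStarAlgebra

variable [NonUnitalCStarAlgebra A]

lemma norm_eq_of_star_mul_self_eq {x y : A} (h : star x * x = star y * y) : ‖x‖ = ‖y‖ := by
  have : ‖x‖ * ‖x‖ = ‖y‖ * ‖y‖ := by
    rw [← CStarRing.norm_star_mul_self, h, CStarRing.norm_star_mul_self]
  exact (mul_self_inj (norm_nonneg x) (norm_nonneg y)).1 this

lemma mul_mem_rightIdeal {w y : A} (hy : y ∈ rightIdeal w) (c : A) : y * c ∈ rightIdeal w :=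
  map_mem_closure (f := (· * c)) (continuous_mul_const c) hy fun _ ⟨d, hd⟩ =>
    ⟨d * c, by simp only [hd, mul_assoc]⟩

lemma sub_mem_rightIdeal {w y z : A} (hy : y ∈ rightIdeal w) (hz : z ∈ rightIdeal w) :
    y - z ∈ rightIdeal w :=
  map_mem_closure₂ continuous_sub hy hz fun _ ⟨c, hc⟩ _ ⟨d, hd⟩ =>
    ⟨c - d, by rw [hc, hd, mul_sub]⟩

lemma rightIdeal_subset_rightIdeal {w v : A} (h : w ∈ rightIdeal v) :
    rightIdeal w ⊆ rightIdeal v :=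
  closure_minimal (fun _ ⟨c, hc⟩ => hc ▸ mul_mem_rightIdeal h c) isClosed_closure

lemma mul_star_sub_cfcₙ_mul (x : A) {f : ℝ → ℝ} (hf : Continuous f) (hf0 : f 0 = 0) :
    (x - cfcₙ f (x * star x) * x) * star (x - cfcₙ f (x * star x) * x) =
      cfcₙ (fun t => t * (1 - f t) ^ 2) (x * star x) := by
  set q := x * star x with hq
  have hF : star (cfcₙ f q) = cfcₙ f q := (cfcₙ_predicate f q).star_eq
  have e : (fun t => t * (1 - f t) ^ 2) =
      fun t => (t - f t * t) - (t * f t - f t * t * f t) := by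
    funext t; ring
  rw [e, cfcₙ_sub (fun t => t - f t * t) (fun t => t * f t - f t * t * f t),
    cfcₙ_sub (fun t => t) (fun t => f t * t),
    cfcₙ_sub (fun t => t * f t) (fun t => f t * t * f t),
    cfcₙ_mul (fun t => f t * t) f, cfcₙ_mul f (fun t => t), cfcₙ_mul (fun t => t) f,
    cfcₙ_id' ℝ q, star_sub, star_mul, hF, hq]
  noncomm_ring

def IsHilbertModuleIsoOn (Φ : A → A) (E F : Set A) : Prop :=
  Set.BijOn Φ E F ∧ (∀ x ∈ E, ∀ y ∈ E, Φ (x + y) = Φ x + Φ y) ∧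
    (∀ x ∈ E, ∀ c : A, Φ (x * c) = Φ x * c) ∧
    (∀ x ∈ E, ∀ y ∈ E, star (Φ x) * Φ y = star x * y)

lemma IsHilbertModuleIsoOn.dist_eq {Φ : A → A} {w : A} {F : Set A}
    (hΦ : IsHilbertModuleIsoOn Φ (rightIdeal w) F) {y z : A} (hy : y ∈ rightIdeal w)
    (hz : z ∈ rightIdeal w) : dist (Φ y) (Φ z) = dist y z := by
  obtain ⟨-, hadd, -, hinner⟩ := hΦ
  have hyz := sub_mem_rightIdeal hy hz
  have hsub : Φ y - Φ z = Φ (y - z) := by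
    rw [sub_eq_iff_eq_add, ← hadd _ hyz _ hz, sub_add_cancel]
  rw [dist_eq_norm, dist_eq_norm, hsub]
  exact norm_eq_of_star_mul_self_eq (hinner _ hyz _ hyz)

def rightMulGraph (u v : A) : AddSubgroup (A × A) :=
  ((AddMonoidHom.mulLeft u).prod (AddMonoidHom.mulLeft v)).range.topologicalClosure

section rightMulGraph

variable {u v : A} {p q : A × A}

lemma coe_rightMulGraph (u v : A) :
    (rightMulGraph u v : Set (A × A)) = closure (Set.range fun c => (u * c, v * c)) :=
  AddSubgroup.topologicalClosure_coe

lemma isClosed_rightMulGraph (u v : A) : IsClosed (rightMulGraph u v : Set (A × A)) :=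
  AddSubgroup.isClosed_topologicalClosure _

lemma mk_mem_rightMulGraph (c : A) : (u * c, v * c) ∈ rightMulGraph u v :=
  AddSubgroup.le_topologicalClosure _ ⟨c, rfl⟩

lemma fst_mem_rightIdeal_of_mem_rightMulGraph (hp : p ∈ rightMulGraph u v) :
    p.1 ∈ rightIdeal u := by
  rw [← SetLike.mem_coe, coe_rightMulGraph] at hp
  exact map_mem_closure continuous_fst hp fun _ ⟨c, hc⟩ => ⟨c, by rw [← hc]⟩

lemma snd_mem_rightIdeal_of_mem_rightMulGraph (hp : p ∈ rightMulGraph u v) :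
    p.2 ∈ rightIdeal v := by
  rw [← SetLike.mem_coe, coe_rightMulGraph] at hp
  exact map_mem_closure continuous_snd hp fun _ ⟨c, hc⟩ => ⟨c, by rw [← hc]⟩

lemma mul_mem_rightMulGraph (hp : p ∈ rightMulGraph u v) (c : A) :
    (p.1 * c, p.2 * c) ∈ rightMulGraph u v := by
  rw [← SetLike.mem_coe, coe_rightMulGraph] at hp ⊢
  refine map_mem_closure (f := fun p : A × A => (p.1 * c, p.2 * c)) (by fun_prop) hp ?_
  rintro _ ⟨d, rfl⟩
  exact ⟨d * c, by simp only [mul_assoc]⟩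

lemma star_snd_mul_snd_of_mem_rightMulGraph (h : star u * u = star v * v)
    (hp : p ∈ rightMulGraph u v) (hq : q ∈ rightMulGraph u v) :
    star p.2 * q.2 = star p.1 * q.1 := by
  rw [← SetLike.mem_coe, coe_rightMulGraph] at hp hq
  have hpq : (p, q) ∈ closure ((Set.range fun c => (u * c, v * c)) ×ˢ
      (Set.range fun c => (u * c, v * c))) := by
    rw [closure_prod_eq]
    exact ⟨hp, hq⟩
  refine Set.EqOn.closure (f := fun pq : (A × A) × (A × A) => star pq.1.2 * pq.2.2)
    (g := fun pq => star pq.1.1 * pq.2.1) ?_ (by fun_prop) (by fun_prop) hpq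
  rintro ⟨_, _⟩ ⟨⟨c, rfl⟩, ⟨d, rfl⟩⟩
  simp only [star_mul, mul_assoc]
  rw [← mul_assoc (star v), ← h, mul_assoc]

lemma dist_snd_of_mem_rightMulGraph (h : star u * u = star v * v)
    (hp : p ∈ rightMulGraph u v) (hq : q ∈ rightMulGraph u v) :
    dist p.2 q.2 = dist p.1 q.1 := by
  have hpq := (rightMulGraph u v).sub_mem hp hq
  rw [dist_eq_norm, dist_eq_norm]
  exact norm_eq_of_star_mul_self_eq (star_snd_mul_snd_of_mem_rightMulGraph h hpq hpq)

lemma rightIdeal_subset_image_fst_rightMulGraph (h : star u * u = star v * v) :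
    rightIdeal u ⊆ Prod.fst '' (rightMulGraph u v : Set (A × A)) := by
  refine closure_minimal (fun _ ⟨c, hc⟩ => ⟨_, mk_mem_rightMulGraph c, hc.symm⟩)
    ((isClosed_rightMulGraph u v).image_of_dist_eq fun p hp q hq => ?_)
  rw [Prod.dist_eq, dist_snd_of_mem_rightMulGraph h hp hq, max_self]

lemma rightIdeal_subset_image_snd_rightMulGraph (h : star u * u = star v * v) :
    rightIdeal v ⊆ Prod.snd '' (rightMulGraph u v : Set (A × A)) := by
  refine closure_minimal (fun _ ⟨c, hc⟩ => ⟨_, mk_mem_rightMulGraph c, hc.symm⟩)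
    ((isClosed_rightMulGraph u v).image_of_dist_eq fun p hp q hq => ?_)
  rw [Prod.dist_eq, dist_snd_of_mem_rightMulGraph h hp hq, max_self]

end rightMulGraph

theorem exists_isHilbertModuleIsoOn_of_star_mul_self_eq {u v : A}
    (h : star u * u = star v * v) :
    ∃ Φ : A → A, IsHilbertModuleIsoOn Φ (rightIdeal u) (rightIdeal v) := by
  set G := rightMulGraph u v
  let Φ (y : A) : A := Classical.epsilon fun z => (y, z) ∈ G
  have hΦ : ∀ y ∈ rightIdeal u, (y, Φ y) ∈ G := by
    intro y hy
    obtain ⟨p, hp, rfl⟩ := rightIdeal_subset_image_fst_rightMulGraph h hy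
    exact Classical.epsilon_spec (p := fun z => (p.1, z) ∈ G) ⟨p.2, hp⟩
  have hΦ_eq : ∀ y z, (y, z) ∈ G → Φ y = z := fun y z hyz => by
    have := dist_snd_of_mem_rightMulGraph h
      (hΦ y (fst_mem_rightIdeal_of_mem_rightMulGraph hyz)) hyz
    rwa [dist_self, dist_eq_zero] at this
  refine ⟨Φ, ⟨fun y hy => snd_mem_rightIdeal_of_mem_rightMulGraph (hΦ y hy),
    fun y hy z hz hyz => ?_, fun z hz => ?_⟩, fun y hy z hz => ?_, fun y hy c => ?_,
    fun y hy z hz => star_snd_mul_snd_of_mem_rightMulGraph h (hΦ y hy) (hΦ z hz)⟩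
  · have := dist_snd_of_mem_rightMulGraph h (hΦ y hy) (hΦ z hz)
    rwa [hyz, dist_self, eq_comm, dist_eq_zero] at this
  · obtain ⟨p, hp, rfl⟩ := rightIdeal_subset_image_snd_rightMulGraph h hz
    exact ⟨p.1, fst_mem_rightIdeal_of_mem_rightMulGraph hp, hΦ_eq _ _ hp⟩
  · exact hΦ_eq _ _ (G.add_mem (hΦ y hy) (hΦ z hz))
  · exact hΦ_eq _ _ (mul_mem_rightMulGraph (hΦ y hy) c)

variable [PartialOrder A] [StarOrderedRing A]

lemma mem_rightIdeal_mul_star_self (x : A) : x ∈ rightIdeal (x * star x) := by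
  set q := x * star x
  rw [rightIdeal, Metric.mem_closure_iff]
  intro δ hδ
  -- `t ↦ t² / (t² + η²)` applied to `q` lies in `q A` and is an approximate left unit for `x`,
  -- because `t (1 - t² / (t² + η²))² ≤ η` on the spectrum of `q`.
  obtain ⟨η, hη, hηδ⟩ : ∃ η : ℝ, 0 < η ∧ η < δ ^ 2 :=
    ⟨δ ^ 2 / 2, by positivity, half_lt_self (by positivity)⟩
  set h : ℝ → ℝ := fun t => t / (t ^ 2 + η ^ 2)
  have hh : Continuous h := continuous_id.div (by fun_prop) fun t => by positivity
  have hmem : cfcₙ (fun t => t * h t) q * x = q * (cfcₙ h q * x) := by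
    rw [cfcₙ_mul (fun t => t) h, cfcₙ_id' ℝ q, mul_assoc]
  refine ⟨_, ⟨_, hmem⟩, ?_⟩
  have hsq : dist x (cfcₙ (fun t => t * h t) q * x) ^ 2 ≤ η := by
    rw [dist_eq_norm, sq, ← CStarRing.norm_self_mul_star,
      mul_star_sub_cfcₙ_mul x (f := fun t => t * h t) (continuous_id.mul hh) (by simp)]
    exact norm_cfcₙ_le fun t ht =>
      abs_mul_one_sub_sq_le (quasispectrum_nonneg_of_nonneg q (mul_star_self_nonneg x) t ht) hη
  exact lt_of_pow_lt_pow_left₀ 2 hδ.le (hsq.trans_lt hηδ)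

lemma rightIdeal_mul_star_self (x : A) : rightIdeal (x * star x) = rightIdeal x :=
  (rightIdeal_subset_rightIdeal (subset_closure ⟨star x, rfl⟩)).antisymm
    (rightIdeal_subset_rightIdeal (mem_rightIdeal_mul_star_self x))

lemma mem_rightIdeal_self (x : A) : x ∈ rightIdeal x :=
  rightIdeal_mul_star_self x ▸ mem_rightIdeal_mul_star_self x

lemma rightIdeal_sqrt {a : A} (ha : 0 ≤ a) : rightIdeal (CFC.sqrt a) = rightIdeal a := by
  rw [← rightIdeal_mul_star_self, (CFC.sqrt_nonneg a).star_eq, CFC.sqrt_mul_sqrt_self a ha]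

lemma rightIdeal_abs (x : A) : rightIdeal (CFC.abs x) = rightIdeal (star x * x) :=
  rightIdeal_sqrt (star_mul_self_nonneg x)

lemma herSub_eq_closure_image2_rightIdeal {w : A} (hw : IsSelfAdjoint w) :
    herSub w = closure (Set.image2 (fun y z => y * star z) (rightIdeal w) (rightIdeal w)) := by
  apply subset_antisymm
  · refine closure_mono fun _ ⟨c, hc⟩ => ⟨w * c, subset_closure ⟨c, rfl⟩, w,
      mem_rightIdeal_self w, by simp only [hc, hw.star_eq]⟩
  · refine closure_minimal ?_ isClosed_closure
    rintro _ ⟨y, hy, z, hz, rfl⟩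
    refine map_mem_closure₂ (f := fun y z => y * star z)
      (continuous_fst.mul continuous_snd.star) hy hz ?_
    rintro _ ⟨c, rfl⟩ _ ⟨d, rfl⟩
    exact ⟨c * star d, by rw [star_mul, hw.star_eq, mul_assoc, mul_assoc, mul_assoc]⟩

lemma mem_herSub_self {a : A} (ha : 0 ≤ a) : a ∈ herSub a := by
  rw [herSub_eq_closure_image2_rightIdeal ha.isSelfAdjoint, ← rightIdeal_sqrt ha]
  refine subset_closure ⟨_, mem_rightIdeal_self _, _, mem_rightIdeal_self _, ?_⟩
  simp only [(CFC.sqrt_nonneg a).star_eq, CFC.sqrt_mul_sqrt_self a ha]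

lemma rightIdeal_eq_closure_image2_herSub {a : A} (ha : 0 ≤ a) :
    rightIdeal a = closure (Set.image2 (· * ·) (herSub a) Set.univ) := by
  apply subset_antisymm
  · exact closure_mono fun _ ⟨c, hc⟩ => ⟨a, mem_herSub_self ha, c, trivial, hc.symm⟩
  · refine closure_minimal ?_ isClosed_closure
    rintro _ ⟨y, hy, c, -, rfl⟩
    refine map_mem_closure (f := (· * c)) (continuous_mul_const c) hy ?_
    rintro _ ⟨d, rfl⟩
    exact ⟨d * a * c, by simp only [mul_assoc]⟩

lemma herSub_eq_herSub_iff {a b : A} (ha : 0 ≤ a) (hb : 0 ≤ b) :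
    herSub a = herSub b ↔ rightIdeal a = rightIdeal b := by
  refine ⟨fun h => ?_, fun h => ?_⟩
  · rw [rightIdeal_eq_closure_image2_herSub ha, rightIdeal_eq_closure_image2_herSub hb, h]
  · rw [herSub_eq_closure_image2_rightIdeal ha.isSelfAdjoint,
      herSub_eq_closure_image2_rightIdeal hb.isSelfAdjoint, h]

lemma blackadarEquiv_iff_exists_rightIdeal_eq {a b : A} (ha : 0 ≤ a) (hb : 0 ≤ b) :
    BlackadarEquiv a b ↔
      ∃ x, rightIdeal a = rightIdeal (star x * x) ∧ rightIdeal b = rightIdeal x := by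
  refine exists_congr fun x => ?_
  rw [herSub_eq_herSub_iff ha (star_mul_self_nonneg x), herSub_eq_herSub_iff hb
    (mul_star_self_nonneg x), rightIdeal_mul_star_self]

lemma IsHilbertModuleIsoOn.rightIdeal_apply {Φ : A → A} {w : A} {F : Set A}
    (hΦ : IsHilbertModuleIsoOn Φ (rightIdeal w) F) : rightIdeal (Φ w) = F := by
  have hdist : ∀ y ∈ rightIdeal w, ∀ z ∈ rightIdeal w, dist (Φ y) (Φ z) = dist y z :=
    fun y hy z hz => hΦ.dist_eq hy hz
  obtain ⟨hbij, -, hmul, -⟩ := hΦ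
  have hw := mem_rightIdeal_self w
  rw [← hbij.image_eq]
  apply subset_antisymm
  · refine closure_minimal ?_ (isClosed_closure.image_of_dist_eq hdist)
    rintro _ ⟨c, rfl⟩
    exact ⟨w * c, subset_closure ⟨c, rfl⟩, hmul w hw c⟩
  · have hcont : ContinuousOn Φ (rightIdeal w) := continuousOn_iff_continuous_domRestrict.2
      (Isometry.of_dist_eq fun (y z : rightIdeal w) => hdist y y.2 z z.2).continuous
    refine hcont.image_closure.trans (closure_mono ?_)
    rintro _ ⟨_, ⟨c, rfl⟩, rfl⟩
    exact ⟨c, hmul w hw c⟩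

end CStarAlgebra

/-- `a ∼ₛ b` iff the Hilbert modules `E_a` and `E_b` are isometrically
isomorphic. -/
theorem blackadarEquiv_iff_hilbertModule_iso [NonUnitalCStarAlgebra A] [PartialOrder A]
    [StarOrderedRing A] (a b : A) (ha : 0 ≤ a) (hb : 0 ≤ b) :
    BlackadarEquiv a b ↔
      ∃ Φ : A → A, Set.BijOn Φ (rightIdeal a) (rightIdeal b) ∧
        (∀ x ∈ rightIdeal a, ∀ y ∈ rightIdeal a, Φ (x + y) = Φ x + Φ y) ∧
        (∀ x ∈ rightIdeal a, ∀ c : A, Φ (x * c) = Φ x * c) ∧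
        (∀ x ∈ rightIdeal a, ∀ y ∈ rightIdeal a, star (Φ x) * Φ y = star x * y) := by
  change _ ↔ ∃ Φ, IsHilbertModuleIsoOn Φ (rightIdeal a) (rightIdeal b)
  rw [blackadarEquiv_iff_exists_rightIdeal_eq ha hb]
  constructor
  · rintro ⟨x, hxa, hxb⟩
    rw [hxa, hxb, ← rightIdeal_abs]
    refine exists_isHilbertModuleIsoOn_of_star_mul_self_eq ?_
    rw [(CFC.abs_nonneg x).star_eq, CFC.abs_mul_abs]
  · rintro ⟨Φ, hΦ⟩
    rw [← rightIdeal_sqrt ha] at hΦ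
    have hs := mem_rightIdeal_self (CFC.sqrt a)
    refine ⟨Φ (CFC.sqrt a), ?_, hΦ.rightIdeal_apply.symm⟩
    obtain ⟨-, -, -, hinner⟩ := hΦ
    rw [hinner _ hs _ hs, (CFC.sqrt_nonneg a).star_eq, CFC.sqrt_mul_sqrt_self a ha]
end
end

section
/- Let A be a C*-algebra and let a', a be positive elements of A with a' ⊂⊂ a. Then there exists a positive element a'' ∈ A with a' ⊂⊂ a'' and a'' ⊂⊂ a. -/
open Filter Topology

noncomputable section

variable {A : Type*}

/-
Let `e ∈ A_a` be positive with `e a' = a'`, and put `a'' = f(e)` for a cut-off `f`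
vanishing on `(-∞, 1/4]` and equal to `1` on `[1/2, ∞)`. A second cut-off `φ`, vanishing on
`(-∞, 1/2]` and equal to `1` on `[3/4, ∞)`, satisfies `f φ f = φ`, so `φ(e) ∈ A_{a''}`; and
`φ(e) a' = a'` because `φ = 1` near `1`. Since `f` vanishes near `0`, `f = r f` with
`r(t) = t s(t) t` for `s(t) = t / max(t, 1/4)^3`, and `r(e) = e s(e) e ∈ A_a`.
-/

def ramp (c d : ℝ) (t : ℝ) : ℝ := min (max (c * t - d) 0) 1

lemma continuous_ramp (c d : ℝ) : Continuous (ramp c d) := by unfold ramp; fun_prop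

lemma ramp_nonneg (c d t : ℝ) : 0 ≤ ramp c d t :=
  le_min (le_max_right _ _) zero_le_one

lemma ramp_eq_zero {c d t : ℝ} (h : c * t ≤ d) : ramp c d t = 0 := by
  simp [ramp, max_eq_right (sub_nonpos.mpr h)]

lemma ramp_eq_one {c d t : ℝ} (h : d + 1 ≤ c * t) : ramp c d t = 1 := by
  rw [ramp, max_eq_left (by linarith), min_eq_right (by linarith)]

section

variable [NonUnitalCStarAlgebra A]

lemma herSub_mul_mul_mem {a s t : A} (hs : s ∈ herSub a) (ht : t ∈ herSub a) (y : A) :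
    s * y * t ∈ herSub a := by
  refine map_mem_closure₂ (f := fun u v => u * y * v) (by fun_prop) hs ht ?_
  rintro u ⟨x, rfl⟩ v ⟨x', rfl⟩
  exact ⟨x * a * y * a * x', by noncomm_ring⟩

lemma cfcₙ_add_mul_one_sub_mul_eq_self {e b : A} (he : IsSelfAdjoint e) (heb : e * b = b)
    {w : ℝ → ℝ} (hw : Continuous w) (hw0 : w 0 = 0) :
    cfcₙ (fun t => t + w t * (1 - t)) e * b = b := by
  have hexpand : cfcₙ (fun t => t + w t * (1 - t)) e = e + cfcₙ w e - cfcₙ w e * e := by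
    rw [cfcₙ_congr (g := fun t => t + w t - w t * t) fun t _ => by ring,
      cfcₙ_sub (fun t => t + w t) (fun t => w t * t), cfcₙ_add (fun t => t) w,
      cfcₙ_mul w (fun t => t), cfcₙ_id' ℝ e]
  rw [hexpand, sub_mul, add_mul, mul_assoc, heb]
  abel

/-- Writing `1 - g t = (1 - w t) * (1 - t)` with `w 0 = 0` makes `b - g(e) b` a multiple of
`b - e b = 0`, so no approximation argument is needed. -/
lemma cfcₙ_mul_eq_self_of_eq_one {e b : A} (he : IsSelfAdjoint e) (heb : e * b = b)
    {g : ℝ → ℝ} (hg : Continuous g) (hg0 : g 0 = 0) {c : ℝ} (hc : c < 1)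
    (hg1 : ∀ t, c ≤ t → g t = 1) : cfcₙ g e * b = b := by
  set w : ℝ → ℝ := fun t => 1 - (1 - g t) / (1 - min t c)
  have hden : ∀ t, 1 - min t c ≠ 0 := fun t => by linarith [min_le_right t c]
  have hw : Continuous w := continuous_const.sub
    ((continuous_const.sub hg).div (continuous_const.sub (continuous_id.min continuous_const)) hden)
  have hc0 : 0 < c := lt_of_not_ge fun h => by simpa [hg0] using hg1 0 h
  have hw0 : w 0 = 0 := by simp [w, hg0, min_eq_left hc0.le]
  have hgw : g = fun t => t + w t * (1 - t) := by
    funext t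
    rcases le_total t c with htc | htc
    · have : 1 - t ≠ 0 := (sub_pos.mpr (htc.trans_lt hc)).ne'
      simp only [w, min_eq_left htc]
      field_simp
      ring
    · simp [w, min_eq_right htc, hg1 t htc]
  rw [hgw]
  exact cfcₙ_add_mul_one_sub_mul_eq_self he heb hw hw0

lemma cfcₙ_mem_herSub_cfcₙ {e : A} {f φ : ℝ → ℝ}
    (hf : Continuous f) (hf0 : f 0 = 0) (hφ : Continuous φ) (hφ0 : φ 0 = 0)
    (hfφ : ∀ t, f t * φ t * f t = φ t) : cfcₙ φ e ∈ herSub (cfcₙ f e) := by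
  refine subset_closure ⟨cfcₙ φ e, ?_⟩
  rw [← cfcₙ_mul f φ e, ← cfcₙ_mul (fun t => f t * φ t) f e]
  exact cfcₙ_congr fun t _ => (hfφ t).symm

lemma cpctContained_cfcₙ_of_eq_zero [PartialOrder A] [StarOrderedRing A] {e a : A} (he : 0 ≤ e)
    (hea : e ∈ herSub a) {f : ℝ → ℝ} (hf : Continuous f) {δ : ℝ} (hδ : 0 < δ)
    (hf0 : ∀ t ≤ δ, f t = 0) :
    CpctContained (cfcₙ f e) a := by
  set s : ℝ → ℝ := fun t => t / max t δ ^ 3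
  have hs : Continuous s :=
    continuous_id.div (by fun_prop) fun t => (pow_pos (hδ.trans_le (le_max_right t δ)) 3).ne'
  have hsandwich : cfcₙ (fun t => t * s t * t) e = e * cfcₙ s e * e := by
    rw [cfcₙ_mul (fun t => t * s t) (fun t => t) e (continuous_id.mul hs).continuousOn,
      cfcₙ_mul (fun t => t) s e (hg := hs.continuousOn), cfcₙ_id' ℝ e]
  refine ⟨e * cfcₙ s e * e, ?_, herSub_mul_mul_mem hea hea _, ?_⟩
  · rw [← hsandwich]
    refine cfcₙ_nonneg fun t ht => ?_
    have ht0 : 0 ≤ t := quasispectrum_nonneg_of_nonneg e he t ht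
    have : 0 ≤ s t := div_nonneg ht0 (by positivity)
    positivity
  · rw [← hsandwich, ← cfcₙ_mul (fun t => t * s t * t) f e
      ((continuous_id.mul hs).mul continuous_id).continuousOn (hg0 := hf0 0 hδ.le)]
    refine cfcₙ_congr fun t _ => ?_
    rcases le_or_gt t δ with htδ | htδ
    · simp [hf0 t htδ]
    · have ht0 : t ≠ 0 := (hδ.trans htδ).ne'
      simp only [s, max_eq_left htδ.le]
      field_simp

end

theorem cpctContained_interpolation_general [NonUnitalCStarAlgebra A] [PartialOrder A]
    [StarOrderedRing A] (a' a : A) (h : CpctContained a' a) :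
    ∃ a'' : A, 0 ≤ a'' ∧ CpctContained a' a'' ∧ CpctContained a'' a := by
  obtain ⟨e, he, hea, hea'⟩ := h
  have hf0 : ramp 4 1 0 = 0 := ramp_eq_zero (by norm_num)
  have hφ0 : ramp 4 2 0 = 0 := ramp_eq_zero (by norm_num)
  have hfφ : ∀ t, ramp 4 1 t * ramp 4 2 t * ramp 4 1 t = ramp 4 2 t := fun t => by
    rcases le_or_gt (4 * t) 2 with ht | ht
    · simp [ramp_eq_zero ht]
    · simp [ramp_eq_one (by linarith : 1 + 1 ≤ 4 * t)]
  refine ⟨cfcₙ (ramp 4 1) e, cfcₙ_nonneg fun t _ => ramp_nonneg 4 1 t,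
    ⟨cfcₙ (ramp 4 2) e, cfcₙ_nonneg fun t _ => ramp_nonneg 4 2 t, ?_, ?_⟩, ?_⟩
  · exact cfcₙ_mem_herSub_cfcₙ (continuous_ramp 4 1) hf0 (continuous_ramp 4 2) hφ0 hfφ
  · exact cfcₙ_mul_eq_self_of_eq_one (.of_nonneg he) hea' (continuous_ramp 4 2) hφ0
      (by norm_num : (3 / 4 : ℝ) < 1) fun t ht => ramp_eq_one (by linarith)
  · exact cpctContained_cfcₙ_of_eq_zero he hea (continuous_ramp 4 1)
      (by norm_num : (0 : ℝ) < 1 / 4) fun t ht => ramp_eq_zero (by linarith)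

/-- compact containment interpolates: `a' ⊂⊂ a` gives `a'' ` with
`a' ⊂⊂ a'' ⊂⊂ a`. -/
theorem cpctContained_interpolation [NonUnitalCStarAlgebra A] [PartialOrder A]
    [StarOrderedRing A] (a' a : A) (ha' : 0 ≤ a') (ha : 0 ≤ a) (h : CpctContained a' a) :
    ∃ a'' : A, 0 ≤ a'' ∧ CpctContained a' a'' ∧ CpctContained a'' a :=
  cpctContained_interpolation_general a' a h
end
end
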